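/- arXiv:2404.04549 — 2 statements merged into one kernel-verified Lean document; each statement's English description precedes it below -/
import Mathlib

section
/- Let b>0 and N ∈ ℕ with N ≥ 2. Let G be the network graph with nodes v_1, …, v_N and edges exactly (v_i, v_{i+1}) for i=1,…,N−1. Let Φ be the positive SNN on G with all weights w_{(v_i,v_{i+1})} = 2b and all delays 0, and let Φ̃ be the positive SNN on G with all weights w̃_{(v_i,v_{i+1})} = b and all delays d̃_{(v_i,v_{i+1})} = b. Then for every input spike time t ∈ ℝ: R(Φ)(t) = t + (N−1)/(2b), R(Φ̃)(t) = t + (N−1)(1/b + b), and consequently |R(Φ)(t) − R(Φ̃)(t)| = (N−1) · (1/(2b²) + 1) · ‖Φ − Φ̃‖_{ℓ∞}. (This shows the Lipschitz constant L·(1+1/b²) in the parameter-Lipschitz bound for positive SNNs is almost tight.) -/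
open scoped BigOperators

noncomputable section

/-- The ReLU function. -/
def relu (t : ℝ) : ℝ := max t 0

/-- A network graph: a finite directed acyclic graph without isolated nodes. -/
structure NetworkGraph (V : Type) [Fintype V] [DecidableEq V] where
  E : Finset (V × V)
  acyclic : WellFounded (fun u v : V => (u, v) ∈ E)
  noIsolated : ∀ v : V, (∃ u, (u, v) ∈ E) ∨ (∃ u, (v, u) ∈ E)

variable {V : Type} [Fintype V] [DecidableEq V]

/-- Input nodes: nodes with no incoming edges. -/
def NetworkGraph.Vin (G : NetworkGraph V) : Set V := {v | ∀ u, (u, v) ∉ G.E}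

/-- Output nodes: nodes with no outgoing edges. -/
def NetworkGraph.Vout (G : NetworkGraph V) : Set V := {v | ∀ u, (v, u) ∉ G.E}

/-- There exists a directed path with `n` edges in `G`. -/
def NetworkGraph.HasPathLen (G : NetworkGraph V) (n : ℕ) : Prop :=
  ∃ p : Fin (n + 1) → V, ∀ i : Fin n, (p i.castSucc, p i.succ) ∈ G.E

/-- The graph depth (length of the longest directed path) of `G` equals `L`. -/
def NetworkGraph.DepthEq (G : NetworkGraph V) (L : ℕ) : Prop :=
  G.HasPathLen L ∧ ∀ n : ℕ, G.HasPathLen n → n ≤ L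

/-- The potential of node `v` at time `s`, given presynaptic spike times `t`,
weights `w` and delays `d`. -/
def potential (G : NetworkGraph V) (w d : V × V → ℝ) (t : V → ℝ) (v : V) (s : ℝ) : ℝ :=
  ∑ u ∈ Finset.univ.filter (fun u => (u, v) ∈ G.E), w (u, v) * relu (s - t u - d (u, v))

/-- `t` is a consistent assignment of spike times extending the input spike times `tin`:
on input nodes it agrees with `tin`, and at every non-input node `v` the spike time `t v`
is the minimum (which exists) of the set of times at which the potential reaches `1`. -/
def IsSpikeMap (G : NetworkGraph V) (w d : V × V → ℝ) (tin : V → ℝ) (t : V → ℝ) : Prop :=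
  (∀ v ∈ G.Vin, t v = tin v) ∧
  ∀ v : V, v ∉ G.Vin → IsLeast {s : ℝ | potential G w d t v s = 1} (t v)

open Classical in
/-- The spike-time assignment determined by the input spike times `tin` (via choice). -/
def spikeMap (G : NetworkGraph V) (w d : V × V → ℝ) (tin : V → ℝ) : V → ℝ :=
  if h : ∃ t, IsSpikeMap G w d tin t then h.choose else fun _ => 0

/-- Realization of a (positive) SNN, given enumerations of input and output nodes. -/
def snnReal (G : NetworkGraph V) (w d : V × V → ℝ) {din dout : ℕ}
    (ein : Fin din → V) (eout : Fin dout → V) (x : Fin din → ℝ) : Fin dout → ℝ :=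
  fun j => spikeMap G w d (Function.extend ein x (fun _ => 0)) (eout j)

/-- Frobenius norm of a real matrix. -/
def frobNorm {m n : ℕ} (A : Matrix (Fin m) (Fin n) ℝ) : ℝ :=
  Real.sqrt (∑ i, ∑ j, (A i j) ^ 2)

/-- Realization of an affine SNN: affine encoder, positive SNN, affine decoder. -/
def affineReal (G : NetworkGraph V) (w d : V × V → ℝ) {din dout d0 d1 : ℕ}
    (ein : Fin din → V) (eout : Fin dout → V)
    (Win : Matrix (Fin din) (Fin d0) ℝ) (bin : Fin din → ℝ)
    (Wout : Matrix (Fin d1) (Fin dout) ℝ) (bout : Fin d1 → ℝ)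
    (x : Fin d0 → ℝ) : Fin d1 → ℝ :=
  Wout.mulVec (snnReal G w d ein eout (Win.mulVec x + bin)) + bout

/-- ℓ∞ distance of the parameters (weights and delays) of two SNNs on the same graph. -/
def paramDist (G : NetworkGraph V) (w d w' d' : V × V → ℝ) : ℝ :=
  sSup ((fun e => max |w e - w' e| |d e - d' e|) '' (G.E : Set (V × V)))

/-- An affine spiking neural network with input dimension `d0` and output dimension `d1`:
a positive SNN together with enumerations of its input/output nodes and an affine
encoder/decoder pair. -/
structure AffSNN (d0 d1 : ℕ) where
  n : ℕ
  din : ℕ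
  dout : ℕ
  G : NetworkGraph (Fin n)
  w : Fin n × Fin n → ℝ
  dl : Fin n × Fin n → ℝ
  ein : Fin din → Fin n
  eout : Fin dout → Fin n
  Win : Matrix (Fin din) (Fin d0) ℝ
  bin : Fin din → ℝ
  Wout : Matrix (Fin d1) (Fin dout) ℝ
  bout : Fin d1 → ℝ
  w_pos : ∀ e ∈ G.E, 0 < w e
  dl_nonneg : ∀ e ∈ G.E, 0 ≤ dl e
  ein_inj : Function.Injective ein
  ein_range : Set.range ein = G.Vin
  eout_inj : Function.Injective eout
  eout_range : Set.range eout = G.Vout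

/-- Realization of an affine SNN. -/
def AffSNN.real {d0 d1 : ℕ} (Ψ : AffSNN d0 d1) : (Fin d0 → ℝ) → Fin d1 → ℝ :=
  affineReal Ψ.G Ψ.w Ψ.dl Ψ.ein Ψ.eout Ψ.Win Ψ.bin Ψ.Wout Ψ.bout

/-- Size of an affine SNN: the number of nonzero scalar entries of
`(W, D, W_in, W_out, b_in, b_out)`. -/
def AffSNN.size {d0 d1 : ℕ} (Ψ : AffSNN d0 d1) : ℕ :=
  {e | e ∈ Ψ.G.E ∧ Ψ.w e ≠ 0}.ncard + {e | e ∈ Ψ.G.E ∧ Ψ.dl e ≠ 0}.ncard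
    + {p : Fin Ψ.din × Fin d0 | Ψ.Win p.1 p.2 ≠ 0}.ncard
    + {p : Fin d1 × Fin Ψ.dout | Ψ.Wout p.1 p.2 ≠ 0}.ncard
    + {i : Fin Ψ.din | Ψ.bin i ≠ 0}.ncard + {i : Fin d1 | Ψ.bout i ≠ 0}.ncard

/-- All scalar weights of the affine SNN are bounded above in absolute value by `C`. -/
def AffSNN.weightsBddAbove {d0 d1 : ℕ} (Ψ : AffSNN d0 d1) (C : ℝ) : Prop :=
  (∀ e ∈ Ψ.G.E, |Ψ.w e| ≤ C) ∧ (∀ e ∈ Ψ.G.E, |Ψ.dl e| ≤ C) ∧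
  (∀ i j, |Ψ.Win i j| ≤ C) ∧ (∀ i, |Ψ.bin i| ≤ C) ∧
  (∀ i j, |Ψ.Wout i j| ≤ C) ∧ (∀ i, |Ψ.bout i| ≤ C)

/-- All synaptic weights of the affine SNN are bounded below by `c`. -/
def AffSNN.synBddBelow {d0 d1 : ℕ} (Ψ : AffSNN d0 d1) (c : ℝ) : Prop :=
  ∀ e ∈ Ψ.G.E, c ≤ Ψ.w e

/-- Clipping to the interval `[0,1]`. -/
def clip01 (y : ℝ) : ℝ := max 0 (min 1 y)

/-- The hypothesis class of `[0,1]`-clipped realizations of affine SNNs on a fixed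
network graph with parameters bounded as in `P*_SNN(G, d⃗; b, B)` (with `d1 = 1`). -/
def clippedClass (G : NetworkGraph V) {din dout : ℕ} (ein : Fin din → V) (eout : Fin dout → V)
    (b B : ℝ) (d0 : ℕ) : Set ((Fin d0 → ℝ) → ℝ) :=
  { f | ∃ (Win : Matrix (Fin din) (Fin d0) ℝ) (bin : Fin din → ℝ)
        (w dl : V × V → ℝ) (Wout : Matrix (Fin 1) (Fin dout) ℝ) (bout : Fin 1 → ℝ),
      (∀ i j, Win i j ∈ Set.Icc (-B) B) ∧ (∀ i, bin i ∈ Set.Icc (-B) B) ∧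
      (∀ e ∈ G.E, w e ∈ Set.Icc b B) ∧ (∀ e ∈ G.E, dl e ∈ Set.Icc 0 B) ∧
      (∀ i j, Wout i j ∈ Set.Icc (-B) B) ∧ (∀ i, bout i ∈ Set.Icc (-B) B) ∧
      f = fun x => clip01 (affineReal G w dl ein eout Win bin Wout bout x 0) }

/-- The Lipschitz constant `L*` from the covering-number estimate. -/
def Lstar (d0 din dout L : ℕ) (b B : ℝ) : ℝ :=
  (dout : ℝ) * (2 * Real.sqrt din * d0 * B + B * L * (1 + 1 / b ^ 2)
    + 2 * B + L * (1 / b + B)) + 1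

/-- A regular triangulation of a compact set `Ω ⊆ ℝ^{d0}`, with simplices recorded by
their vertex sets. -/
structure RegTriangulation (d0 : ℕ) (Ω : Set (Fin d0 → ℝ)) where
  nodes : Finset (Fin d0 → ℝ)
  faces : Finset (Finset (Fin d0 → ℝ))
  nodes_sub : (nodes : Set (Fin d0 → ℝ)) ⊆ Ω
  card_face : ∀ S ∈ faces, S.card = d0 + 1
  indep : ∀ S ∈ faces, AffineIndependent ℝ ((↑) : {x // x ∈ S} → (Fin d0 → ℝ))
  face_nodes : ∀ S ∈ faces,
    (nodes : Set (Fin d0 → ℝ)) ∩ convexHull ℝ (S : Set (Fin d0 → ℝ)) = (S : Set (Fin d0 → ℝ))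
  cover : Ω = ⋃ S ∈ faces, convexHull ℝ (S : Set (Fin d0 → ℝ))
  inter : ∀ S ∈ faces, ∀ S' ∈ faces,
    convexHull ℝ (S : Set (Fin d0 → ℝ)) ∩ convexHull ℝ (S' : Set (Fin d0 → ℝ))
      = convexHull ℝ ((S ∩ S' : Finset (Fin d0 → ℝ)) : Set (Fin d0 → ℝ))

/-- Euclidean distance on `ℝ^{d0}` (realized as `Fin d0 → ℝ`). -/
def eudist {d0 : ℕ} (x y : Fin d0 → ℝ) : ℝ := Real.sqrt (∑ i, (x i - y i) ^ 2)

/-- Minimal mesh size: the minimal distance between two distinct nodes of a simplex. -/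
def hmin {d0 : ℕ} {Ω : Set (Fin d0 → ℝ)} (T : RegTriangulation d0 Ω) : ℝ :=
  sInf { r | ∃ S ∈ T.faces, ∃ x ∈ S, ∃ y ∈ S, x ≠ y ∧ r = eudist x y }

/-- Maximal mesh size: the maximal distance between two nodes of a simplex. -/
def hmax {d0 : ℕ} {Ω : Set (Fin d0 → ℝ)} (T : RegTriangulation d0 Ω) : ℝ :=
  sSup { r | ∃ S ∈ T.faces, ∃ x ∈ S, ∃ y ∈ S, r = eudist x y }

/-- `f` belongs to the linear finite element space `V_T`: it is continuous on `Ω` and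
affine on each simplex of `T`. -/
def PiecewiseAffineOn {d0 : ℕ} {Ω : Set (Fin d0 → ℝ)} (T : RegTriangulation d0 Ω)
    (f : (Fin d0 → ℝ) → ℝ) : Prop :=
  ContinuousOn f Ω ∧ ∀ S ∈ T.faces, ∃ (a : Fin d0 → ℝ) (c : ℝ),
    ∀ x ∈ convexHull ℝ (S : Set (Fin d0 → ℝ)), f x = ∑ i, a i * x i + c

/-- Admissibility of a compact domain: existence of quasi-uniform triangulations. -/
def Admissible (d0 : ℕ) (Ω : Set (Fin d0 → ℝ)) : Prop :=
  ∃ C1 C2 c2 : ℝ, 0 < C1 ∧ 0 < C2 ∧ 0 < c2 ∧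
    ∀ N : ℕ, 0 < N → ∃ T : RegTriangulation d0 Ω,
      (T.faces.card : ℝ) ≤ C1 * N ∧
      c2 * (N : ℝ) ^ (-(1 : ℝ) / d0) ≤ hmin T ∧
      hmin T ≤ hmax T ∧
      hmax T ≤ C2 * (N : ℝ) ^ (-(1 : ℝ) / d0)

/-- The `W^{s,∞}(Ω)` norm (for `C^s` functions): supremum over `Ω` of the norms of the
iterated derivatives of order at most `s`. -/
def sobNorm {d0 : ℕ} (s : ℕ) (Ω : Set (Fin d0 → ℝ)) (f : (Fin d0 → ℝ) → ℝ) : ℝ :=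
  sSup { r | ∃ k ≤ s, ∃ x ∈ Ω, r = ‖iteratedFDeriv ℝ k f x‖ }

/-- The `L^∞(Ω)` norm. -/
def supNormOn {d0 : ℕ} (Ω : Set (Fin d0 → ℝ)) (f : (Fin d0 → ℝ) → ℝ) : ℝ :=
  sSup ((fun x => |f x|) '' Ω)

/-- The Barron class `Γ_K`. -/
def BarronClass (d0 : ℕ) (K : ℝ) (f : (Fin d0 → ℝ) → ℝ) : Prop :=
  MeasureTheory.LocallyIntegrable f MeasureTheory.volume ∧
  ∃ g : (Fin d0 → ℝ) → ℂ, Measurable g ∧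
    (∀ x, (f x : ℂ) = ∫ ξ, Complex.exp (Complex.I * ((∑ i, x i * ξ i : ℝ) : ℂ)) * g ξ) ∧
    (∫ ξ, eudist ξ 0 * ‖g ξ‖) ≤ K

lemma setOf_mul_relu_sub_eq_one {W : ℝ} (hW : 0 < W) (a : ℝ) :
    {s : ℝ | W * relu (s - a) = 1} = {a + 1 / W} := by
  ext s
  simp only [Set.mem_ofPred_eq, Set.mem_singleton_iff, relu]
  rcases le_total (s - a) 0 with hs | hs
  · rw [max_eq_right hs, mul_zero]
    constructor
    · exact fun h => absurd h zero_ne_one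
    · intro h
      have : 0 < 1 / W := by positivity
      linarith
  · rw [max_eq_left hs]
    constructor
    · intro h
      field_simp
      linarith
    · rintro rfl
      field_simp
      ring

section SpikeMap

variable {V : Type} [Fintype V] [DecidableEq V] {G : NetworkGraph V} {w d : V × V → ℝ}

lemma potential_congr {t t' : V → ℝ} {v : V} (h : ∀ u, (u, v) ∈ G.E → t u = t' u) :
    potential G w d t v = potential G w d t' v := by
  funext s
  refine Finset.sum_congr rfl fun u hu => ?_
  rw [h u (Finset.mem_filter.1 hu).2]

lemma potential_of_preds_eq_singleton {t : V → ℝ} {u v : V}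
    (h : Finset.univ.filter (fun x => (x, v) ∈ G.E) = {u}) (s : ℝ) :
    potential G w d t v s = w (u, v) * relu (s - t u - d (u, v)) := by
  rw [potential, h, Finset.sum_singleton]

/-- Spike times are determined by the input spike times, by well-founded induction along the
acyclic edge relation: the potential at `v` only sees the spike times of its predecessors. -/
theorem IsSpikeMap.eq {tin t t' : V → ℝ} (h : IsSpikeMap G w d tin t)
    (h' : IsSpikeMap G w d tin t') : t = t' := by
  funext v
  induction v using G.acyclic.induction with
  | _ v ih =>
    by_cases hv : v ∈ G.Vin
    · rw [h.1 v hv, h'.1 v hv]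
    · refine (h.2 v hv).unique ?_
      rw [potential_congr ih]
      exact h'.2 v hv

theorem spikeMap_eq {tin t : V → ℝ} (h : IsSpikeMap G w d tin t) : spikeMap G w d tin = t := by
  have hex : ∃ t, IsSpikeMap G w d tin t := ⟨t, h⟩
  rw [spikeMap, dif_pos hex]
  exact hex.choose_spec.eq h

lemma paramDist_eq_of_forall {w' d' : V × V → ℝ} {c : ℝ} (hne : G.E.Nonempty)
    (h : ∀ e ∈ G.E, max |w e - w' e| |d e - d' e| = c) : paramDist G w d w' d' = c := by
  rw [paramDist, Set.image_congr h, (Finset.coe_nonempty.2 hne).image_const, csSup_singleton]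

end SpikeMap

def chainEdges (N : ℕ) : Finset (Fin N × Fin N) :=
  Finset.univ.filter (fun p : Fin N × Fin N => p.2.val = p.1.val + 1)

section Chain

variable {N : ℕ} {G : NetworkGraph (Fin N)} (hE : G.E = chainEdges N)
include hE

lemma chain_mem_edges {u v : Fin N} : (u, v) ∈ G.E ↔ v.val = u.val + 1 := by
  simp [hE, chainEdges]

lemma chain_mem_Vin_iff (v : Fin N) : v ∈ G.Vin ↔ v.val = 0 := by
  simp only [NetworkGraph.Vin, Set.mem_ofPred_eq, chain_mem_edges hE]
  refine ⟨fun h => ?_, fun h u => by omega⟩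
  by_contra h0
  exact h ⟨v.val - 1, by omega⟩ (by simp only; omega)

lemma chain_preds {v : Fin N} (hv : 0 < v.val) :
    Finset.univ.filter (fun u => (u, v) ∈ G.E) = {⟨v.val - 1, by omega⟩} := by
  ext u
  simp only [Finset.mem_filter, Finset.mem_univ, true_and, Finset.mem_singleton,
    chain_mem_edges hE, Fin.ext_iff]
  omega

theorem isSpikeMap_chain {w d : Fin N × Fin N → ℝ} {W D : ℝ} (hW : 0 < W)
    (hw : ∀ e ∈ G.E, w e = W) (hd : ∀ e ∈ G.E, d e = D) {tin : Fin N → ℝ} {t : ℝ}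
    (htin : ∀ v : Fin N, v.val = 0 → tin v = t) :
    IsSpikeMap G w d tin (fun v => t + v.val * (D + 1 / W)) := by
  refine ⟨fun v hv => ?_, fun v hv => ?_⟩
  · have hv0 := (chain_mem_Vin_iff hE v).1 hv
    simp [hv0, htin v hv0]
  · have hv0 : 0 < v.val := Nat.pos_of_ne_zero (mt (chain_mem_Vin_iff hE v).2 hv)
    have hmem : ((⟨v.val - 1, by omega⟩ : Fin N), v) ∈ G.E :=
      (chain_mem_edges hE).2 (by simp only; omega)
    simp_rw [potential_of_preds_eq_singleton (chain_preds hE hv0), hw _ hmem, hd _ hmem, sub_sub,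
      setOf_mul_relu_sub_eq_one hW]
    have hstep :
        t + ((v.val - 1 : ℕ) : ℝ) * (D + 1 / W) + D + 1 / W = t + v.val * (D + 1 / W) := by
      push_cast [Nat.cast_sub hv0]
      ring
    rw [hstep]
    exact isLeast_singleton

end Chain

/-- Remark: near-tightness of the parameter-Lipschitz bound.
On the chain graph with `N` nodes, the positive SNN with weights `2b`, delays `0`
realizes `t ↦ t + (N−1)/(2b)`, the one with weights `b`, delays `b` realizes
`t ↦ t + (N−1)(1/b + b)`, and the difference equals
`(N−1)·(1/(2b²) + 1)·‖Φ − Φ̃‖_∞`. -/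
theorem statement3 (b : ℝ) (hb : 0 < b) (N : ℕ) (hN : 2 ≤ N)
    (G : NetworkGraph (Fin N))
    (hE : G.E = Finset.univ.filter (fun p : Fin N × Fin N => p.2.val = p.1.val + 1))
    (ein : Fin 1 → Fin N) (eout : Fin 1 → Fin N)
    (hein : ein 0 = ⟨0, by omega⟩) (heout : eout 0 = ⟨N - 1, by omega⟩)
    (w d w' d' : Fin N × Fin N → ℝ)
    (hw : ∀ e ∈ G.E, w e = 2 * b) (hd : ∀ e ∈ G.E, d e = 0)
    (hw' : ∀ e ∈ G.E, w' e = b) (hd' : ∀ e ∈ G.E, d' e = b)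
    (t : ℝ) :
    snnReal G w d ein eout (fun _ => t) 0 = t + ((N : ℝ) - 1) / (2 * b) ∧
    snnReal G w' d' ein eout (fun _ => t) 0 = t + ((N : ℝ) - 1) * (1 / b + b) ∧
    |snnReal G w d ein eout (fun _ => t) 0 - snnReal G w' d' ein eout (fun _ => t) 0|
      = ((N : ℝ) - 1) * (1 / (2 * b ^ 2) + 1) * paramDist G w d w' d' := by
  have htin (v : Fin N) (hv : v.val = 0) :
      Function.extend ein (fun _ => t) (fun _ => 0) v = t := by
    rw [show v = ein 0 from hein ▸ Fin.ext hv]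
    exact Function.Injective.extend_apply (f := ein) (fun _ _ _ => Subsingleton.elim _ _) _ _ 0
  have hout : ((eout 0).val : ℝ) = N - 1 := by
    rw [heout]; push_cast [Nat.cast_sub (by omega : 1 ≤ N)]; ring
  have h1 : snnReal G w d ein eout (fun _ => t) 0 = t + ((N : ℝ) - 1) / (2 * b) := by
    simp only [snnReal, spikeMap_eq (isSpikeMap_chain hE (by positivity) hw hd htin), hout]
    ring
  have h2 : snnReal G w' d' ein eout (fun _ => t) 0 = t + ((N : ℝ) - 1) * (1 / b + b) := by
    simp only [snnReal, spikeMap_eq (isSpikeMap_chain hE hb hw' hd' htin), hout]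
    ring
  have hdist : paramDist G w d w' d' = b := by
    refine paramDist_eq_of_forall ⟨(⟨0, by omega⟩, ⟨1, by omega⟩), by simp [hE]⟩ fun e he => ?_
    rw [hw e he, hw' e he, hd e he, hd' e he, two_mul, add_sub_cancel_right, zero_sub, abs_neg,
      max_self, abs_of_pos hb]
  have hN1 : (0 : ℝ) ≤ N - 1 := by
    have : (2 : ℝ) ≤ N := by exact_mod_cast hN
    linarith
  refine ⟨h1, h2, ?_⟩
  rw [h1, h2, hdist, abs_sub_comm, abs_of_nonneg]
  · field_simp
    ring
  · field_simp
    nlinarith [sq_nonneg b]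
end
end

section
/- Let Ψ = (A_in, Φ, A_out) and Ψ̃ = (Ã_in, Φ̃, Ã_out) be two affine SNNs whose positive SNNs Φ=(G,W,D), Φ̃=(G,W̃,D̃) share the same network graph G of graph depth L. Suppose there exist b, B ∈ (0,∞) such that every synaptic weight of Φ and Φ̃ is ≥ b and every synaptic delay of Φ and Φ̃ is ≤ B. Set W*_out := max{‖W_out‖_F, ‖W̃_out‖_F}, W*_in := max{‖W_in‖_F, ‖W̃_in‖_F}, b*_in := max{‖b_in‖_{ℓ∞}, ‖b̃_in‖_{ℓ∞}}. Then for every x ∈ ℝ^{d_0}: ‖R(Ψ)(x) − R(Ψ̃)(x)‖_{ℓ∞} ≤ B₁ + B₂, where B₁ = d_out^{1/2} · W*_out · ( d_0^{1/2} ‖W_in − W̃_in‖_F ‖x‖_{ℓ∞} + L·(1 + 1/b²)·‖Φ − Φ̃‖_{ℓ∞} + ‖b_in − b̃_in‖_{ℓ∞} ) and B₂ = d_out^{1/2} ‖W_out − W̃_out‖_F · ( d_0^{1/2} W*_in ‖x‖_{ℓ∞} + b*_in + L·(1/b + B) ) + ‖b_out − b̃_out‖_{ℓ∞}. -/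
open scoped BigOperators

/-!
Spike times are controlled node by node, following the graph. At a non-input node every
active presynaptic term has weight at least `b` and the potential has reached only `1`, so
each active term has been rising for at most `1/b`. Hence the spike time exceeds the latest
presynaptic arrival by at most `1/b`, and perturbing the weights and delays by `δ` and the
presynaptic spike times by `η` moves it by at most `η + (1 + 1/b²) δ`. Along the longest path
into a node (of length at most `L`) this gives `|t_v - t̃_v| ≤ ‖A_in x - Ã_in x‖ + L (1 + 1/b²) δ`
and `|t̃_v| ≤ ‖Ã_in x‖ + L (1/b + B)`. The affine maps enter through
`‖A z‖_∞ ≤ √n ‖A‖_F ‖z‖_∞`.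
-/

open Finset Matrix

namespace NetworkGraph

variable {V : Type} [Fintype V] [DecidableEq V]

def preds (G : NetworkGraph V) (v : V) : Finset V :=
  univ.filter fun u => (u, v) ∈ G.E

variable {G : NetworkGraph V}

@[simp]
lemma mem_preds {u v : V} : u ∈ G.preds v ↔ (u, v) ∈ G.E := by
  simp [preds]

lemma preds_nonempty {v : V} (hv : v ∉ G.Vin) : (G.preds v).Nonempty := by
  by_contra h
  exact hv fun u hu => h ⟨u, mem_preds.2 hu⟩

variable (G) in
/-- The length of the longest directed path ending at `v`. -/
def height : V → ℕ :=
  G.acyclic.fix fun v ih => (G.preds v).attach.sup fun u => ih u.1 (mem_preds.1 u.2) + 1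

variable (G) in
lemma height_eq (v : V) : G.height v = (G.preds v).sup fun u => G.height u + 1 := by
  conv_lhs => rw [height, WellFounded.fix_eq]
  exact sup_attach (G.preds v) fun u => G.height u + 1

lemma height_succ_le {u v : V} (h : (u, v) ∈ G.E) : G.height u + 1 ≤ G.height v := by
  rw [height_eq G v]
  exact le_sup (f := fun u => G.height u + 1) (mem_preds.2 h)

variable (G) in
lemma exists_path_height (v : V) :
    ∃ p : Fin (G.height v + 1) → V,
      (∀ i : Fin (G.height v), (p i.castSucc, p i.succ) ∈ G.E) ∧ p (Fin.last _) = v := by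
  induction v using WellFounded.induction G.acyclic with
  | _ v ih =>
    rcases hn : G.height v with _ | n
    · exact ⟨fun _ => v, fun i => i.elim0, rfl⟩
    have hne : (G.preds v).Nonempty := by
      by_contra h
      rw [not_nonempty_iff_eq_empty] at h
      simp [height_eq G v, h] at hn
    obtain ⟨u, hu, hsup⟩ := exists_mem_eq_sup _ hne fun u => G.height u + 1
    have hedge : (u, v) ∈ G.E := mem_preds.1 hu
    obtain ⟨q, hq, hql⟩ := ih u hedge
    obtain rfl : G.height u = n := by rw [height_eq G v, hsup] at hn; omega
    refine ⟨Fin.snoc q v, fun i => ?_, by simp⟩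
    induction i using Fin.lastCases with
    | last => simpa [Fin.snoc_castSucc, Fin.snoc_last, Fin.succ_last, hql] using hedge
    | cast j =>
      rw [Fin.succ_castSucc, Fin.snoc_castSucc, Fin.snoc_castSucc]
      exact hq j

lemma height_le {L : ℕ} (hL : ∀ n, G.HasPathLen n → n ≤ L) (v : V) : G.height v ≤ L := by
  obtain ⟨p, hp, -⟩ := G.exists_path_height v
  exact hL _ ⟨p, hp⟩

end NetworkGraph

open NetworkGraph

lemma relu_nonneg (t : ℝ) : 0 ≤ relu t := le_max_right _ _

lemma relu_of_nonpos {t : ℝ} (h : t ≤ 0) : relu t = 0 := max_eq_right h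

lemma relu_of_nonneg {t : ℝ} (h : 0 ≤ t) : relu t = t := max_eq_left h

lemma relu_monotone : Monotone relu := fun _ _ h => max_le_max h le_rfl

lemma continuous_relu : Continuous relu := continuous_id.max continuous_const

/-- Since `w' * relu a ≤ 1` and `w' ≥ b`, an active term has `a ≤ 1/b`; this is what turns a
weight error `δ` into a time shift `δ / b²`. -/
lemma mul_relu_le_mul_relu_add {w w' a b δ : ℝ} (hb : 0 < b) (hbw : b ≤ w) (hbw' : b ≤ w')
    (hδ : 0 ≤ δ) (hw : w' ≤ w + δ) (h1 : w' * relu a ≤ 1) :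
    w' * relu a ≤ w * relu (a + δ / b ^ 2) := by
  rcases le_or_gt a 0 with ha | ha
  · rw [relu_of_nonpos ha, mul_zero]
    exact mul_nonneg (hb.le.trans hbw) (relu_nonneg _)
  rw [relu_of_nonneg ha.le] at h1 ⊢
  rw [relu_of_nonneg (by positivity)]
  have hab : a * b ≤ 1 := by nlinarith
  have hδa : δ * a ≤ δ / b := by
    rw [le_div_iff₀ hb]
    nlinarith
  have hbδ : δ / b ≤ w * (δ / b ^ 2) := by
    calc δ / b = b * (δ / b ^ 2) := by field_simp
      _ ≤ w * (δ / b ^ 2) := by gcongr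
  calc w' * a ≤ (w + δ) * a := by gcongr
    _ ≤ w * a + w * (δ / b ^ 2) := by linarith
    _ = w * (a + δ / b ^ 2) := by ring

section Potential

variable {V : Type} [Fintype V] [DecidableEq V] {G : NetworkGraph V} {w d : V × V → ℝ}
  {t : V → ℝ} {v : V}

lemma potential_eq_sum_preds (s : ℝ) :
    potential G w d t v s = ∑ u ∈ G.preds v, w (u, v) * relu (s - t u - d (u, v)) :=
  rfl

lemma continuous_potential : Continuous (potential G w d t v) :=
  continuous_finsetSum _ fun u _ =>
    continuous_const.mul (continuous_relu.comp (by fun_prop))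

lemma potential_monotone (hw : ∀ u ∈ G.preds v, 0 ≤ w (u, v)) :
    Monotone (potential G w d t v) := fun _ _ hs =>
  sum_le_sum fun u hu => mul_le_mul_of_nonneg_left (relu_monotone (by linarith)) (hw u hu)

lemma potential_eq_zero {s : ℝ} (hs : ∀ u ∈ G.preds v, s ≤ t u + d (u, v)) :
    potential G w d t v s = 0 :=
  sum_eq_zero fun u hu => by rw [relu_of_nonpos (by linarith [hs u hu]), mul_zero]

lemma lt_of_potential_eq_one {s m : ℝ} (hs : potential G w d t v s = 1)
    (hm : ∀ u ∈ G.preds v, m ≤ t u + d (u, v)) : m < s := by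
  by_contra! h
  have := potential_eq_zero (w := w) fun u hu => h.trans (hm u hu)
  linarith

lemma one_le_potential {u : V} (hu : u ∈ G.preds v) (hw : ∀ u ∈ G.preds v, 0 ≤ w (u, v))
    (hwu : 0 < w (u, v)) : 1 ≤ potential G w d t v (t u + d (u, v) + (w (u, v))⁻¹) := by
  have hterm : w (u, v) * relu (t u + d (u, v) + (w (u, v))⁻¹ - t u - d (u, v)) = 1 := by
    rw [show t u + d (u, v) + (w (u, v))⁻¹ - t u - d (u, v) = (w (u, v))⁻¹ by ring,
      relu_of_nonneg (inv_nonneg.2 hwu.le), mul_inv_cancel₀ hwu.ne']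
  rw [potential_eq_sum_preds, ← hterm]
  exact single_le_sum (f := fun u' => w (u', v) * relu (_ - t u' - d (u', v)))
    (fun u' hu' => mul_nonneg (hw u' hu') (relu_nonneg _)) hu

lemma exists_potential_eq_one_le (hv : v ∉ G.Vin) {s₁ : ℝ} (h₁ : 1 ≤ potential G w d t v s₁) :
    ∃ s ≤ s₁, potential G w d t v s = 1 := by
  set s₀ := min ((G.preds v).inf' (preds_nonempty hv) fun u => t u + d (u, v)) s₁
  have h₀ : potential G w d t v s₀ = 0 :=
    potential_eq_zero fun u hu => (min_le_left _ _).trans (inf'_le _ hu)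
  obtain ⟨s, hs, hPs⟩ := intermediate_value_Icc (min_le_right _ s₁)
    continuous_potential.continuousOn ⟨h₀.le.trans zero_le_one, h₁⟩
  exact ⟨s, hs.2, hPs⟩

lemma le_of_isLeast_of_one_le_potential (hv : v ∉ G.Vin) {τ s₁ : ℝ}
    (hl : IsLeast {s | potential G w d t v s = 1} τ) (h₁ : 1 ≤ potential G w d t v s₁) :
    τ ≤ s₁ := by
  obtain ⟨s, hs, hPs⟩ := exists_potential_eq_one_le hv h₁
  exact (hl.2 hPs).trans hs

lemma isLeast_sInf_potential (hv : v ∉ G.Vin) (hw : ∀ u ∈ G.preds v, 0 < w (u, v)) :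
    IsLeast {s | potential G w d t v s = 1} (sInf {s | potential G w d t v s = 1}) := by
  have hw₀ : ∀ u ∈ G.preds v, 0 ≤ w (u, v) := fun u hu => (hw u hu).le
  obtain ⟨u, hu⟩ := preds_nonempty hv
  obtain ⟨s, -, hs⟩ := exists_potential_eq_one_le hv (one_le_potential hu hw₀ (hw u hu))
  have hbdd : BddBelow {s | potential G w d t v s = 1} :=
    ⟨(G.preds v).inf' ⟨u, hu⟩ fun u => t u + d (u, v), fun s hs =>
      (lt_of_potential_eq_one hs fun u hu => inf'_le (fun u => t u + d (u, v)) hu).le⟩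
  exact ⟨(isClosed_eq continuous_potential continuous_const).csInf_mem ⟨s, hs⟩ hbdd,
    fun _ hs => csInf_le hbdd hs⟩

lemma le_add_of_isLeast (hv : v ∉ G.Vin) {b : ℝ} (hb : 0 < b)
    (hw : ∀ u ∈ G.preds v, b ≤ w (u, v)) {τ s₀ : ℝ}
    (hl : IsLeast {s | potential G w d t v s = 1} τ)
    (hs₀ : ∀ u ∈ G.preds v, t u + d (u, v) ≤ s₀) : τ ≤ s₀ + 1 / b := by
  have hw₀ : ∀ u ∈ G.preds v, 0 ≤ w (u, v) := fun u hu => hb.le.trans (hw u hu)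
  obtain ⟨u, hu⟩ := preds_nonempty hv
  have hwu : 0 < w (u, v) := hb.trans_le (hw u hu)
  refine le_of_isLeast_of_one_le_potential hv hl
    ((one_le_potential (d := d) (t := t) hu hw₀ hwu).trans (potential_monotone hw₀ ?_))
  gcongr
  · exact hs₀ u hu
  · rw [one_div]
    exact inv_anti₀ hb (hw u hu)

/-- Term by term, the unprimed potential at `τ' + η` dominates the primed one at `τ'`. -/
lemma le_add_of_isLeast_of_potential_eq_one (hv : v ∉ G.Vin) {w' d' : V × V → ℝ} {t' : V → ℝ}
    {b δ η τ τ' : ℝ} (hb : 0 < b) (hδ : 0 ≤ δ) (hw : ∀ u ∈ G.preds v, b ≤ w (u, v))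
    (hw' : ∀ u ∈ G.preds v, b ≤ w' (u, v)) (hww : ∀ u ∈ G.preds v, w' (u, v) ≤ w (u, v) + δ)
    (hl : IsLeast {s | potential G w d t v s = 1} τ) (hl' : potential G w' d' t' v τ' = 1)
    (hη : ∀ u ∈ G.preds v, t u + d (u, v) + δ / b ^ 2 ≤ t' u + d' (u, v) + η) :
    τ ≤ τ' + η := by
  have hw₀ : ∀ u ∈ G.preds v, 0 ≤ w (u, v) := fun u hu => hb.le.trans (hw u hu)
  refine le_of_isLeast_of_one_le_potential hv hl ?_
  rw [← hl', potential_eq_sum_preds, potential_eq_sum_preds]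
  refine sum_le_sum fun u hu => ?_
  have hterm : w' (u, v) * relu (τ' - t' u - d' (u, v)) ≤ 1 := by
    rw [← hl']
    exact single_le_sum (f := fun u => w' (u, v) * relu (τ' - t' u - d' (u, v)))
      (fun u hu => mul_nonneg (hb.le.trans (hw' u hu)) (relu_nonneg _)) hu
  calc w' (u, v) * relu (τ' - t' u - d' (u, v))
      ≤ w (u, v) * relu (τ' - t' u - d' (u, v) + δ / b ^ 2) :=
        mul_relu_le_mul_relu_add hb (hw u hu) (hw' u hu) hδ (hww u hu) hterm
    _ ≤ w (u, v) * relu (τ' + η - t u - d (u, v)) := by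
        gcongr
        · exact hw₀ u hu
        · exact relu_monotone (by linarith [hη u hu])

end Potential

section SpikeMap

variable {V : Type} [Fintype V] [DecidableEq V] {G : NetworkGraph V} {w d : V × V → ℝ}
  {tin t : V → ℝ}

open Classical in
variable (G w d tin) in
noncomputable def spikeRec : V → ℝ :=
  G.acyclic.fix fun v ih => if v ∈ G.Vin then tin v else
    sInf {s | ∑ u ∈ (G.preds v).attach,
      w (u.1, v) * relu (s - ih u.1 (mem_preds.1 u.2) - d (u.1, v)) = 1}

open Classical in
variable (G w d tin) in
lemma spikeRec_eq (v : V) :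
    spikeRec G w d tin v = if v ∈ G.Vin then tin v else
      sInf {s | potential G w d (spikeRec G w d tin) v s = 1} := by
  conv_lhs => rw [spikeRec, WellFounded.fix_eq]
  refine if_congr Iff.rfl rfl (congrArg sInf (Set.ext fun s => ?_))
  exact Iff.of_eq <| congrArg (· = 1) <|
    (sum_attach (G.preds v) fun u => w (u, v) * relu (s - spikeRec G w d tin u - d (u, v)))

lemma isSpikeMap_spikeMap (tin : V → ℝ) (hw : ∀ e ∈ G.E, 0 < w e) :
    IsSpikeMap G w d tin (spikeMap G w d tin) := by
  have h : ∃ t, IsSpikeMap G w d tin t := by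
    refine ⟨spikeRec G w d tin, fun v hv => by rw [spikeRec_eq, if_pos hv], fun v hv => ?_⟩
    rw [spikeRec_eq, if_neg hv]
    exact isLeast_sInf_potential hv fun u hu => hw _ (mem_preds.1 hu)
  rw [spikeMap, dif_pos h]
  exact h.choose_spec

lemma IsSpikeMap.le_apply (ht : IsSpikeMap G w d tin t) (hd : ∀ e ∈ G.E, 0 ≤ d e) {m : ℝ}
    (hm : ∀ v ∈ G.Vin, m ≤ tin v) (v : V) : m ≤ t v := by
  induction v using WellFounded.induction G.acyclic with
  | _ v ih =>
    by_cases hv : v ∈ G.Vin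
    · exact (ht.1 v hv).symm ▸ hm v hv
    refine (lt_of_potential_eq_one (ht.2 v hv).1 fun u hu => ?_).le
    have hu := mem_preds.1 hu
    linarith [ih u hu, hd _ hu]

lemma IsSpikeMap.apply_le_add_height (ht : IsSpikeMap G w d tin t) {b B M : ℝ} (hb : 0 < b)
    (hB : 0 ≤ B) (hw : ∀ e ∈ G.E, b ≤ w e) (hdB : ∀ e ∈ G.E, d e ≤ B)
    (hM : ∀ v ∈ G.Vin, tin v ≤ M) (v : V) : t v ≤ M + G.height v * (1 / b + B) := by
  induction v using WellFounded.induction G.acyclic with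
  | _ v ih =>
    by_cases hv : v ∈ G.Vin
    · rw [ht.1 v hv]
      linarith [hM v hv, show 0 ≤ (G.height v : ℝ) * (1 / b + B) by positivity]
    refine (le_add_of_isLeast hv hb (fun u hu => hw _ (mem_preds.1 hu)) (ht.2 v hv)
      (s₀ := M + (G.height v - 1) * (1 / b + B) + B) fun u hu => ?_).trans_eq (by ring)
    have hu := mem_preds.1 hu
    have hh : (G.height u : ℝ) + 1 ≤ G.height v := by exact_mod_cast height_succ_le hu
    nlinarith [ih u hu, hdB _ hu, show 0 ≤ 1 / b + B by positivity]

lemma IsSpikeMap.apply_le_apply_add_height {w' d' : V × V → ℝ} {tin' t' : V → ℝ}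
    (ht : IsSpikeMap G w d tin t) (ht' : IsSpikeMap G w' d' tin' t') {b δ ε : ℝ}
    (hb : 0 < b) (hδ : 0 ≤ δ) (hw : ∀ e ∈ G.E, b ≤ w e) (hw' : ∀ e ∈ G.E, b ≤ w' e)
    (hww : ∀ e ∈ G.E, w' e ≤ w e + δ) (hdd : ∀ e ∈ G.E, d e ≤ d' e + δ)
    (hin : ∀ v ∈ G.Vin, tin v ≤ tin' v + ε) (v : V) :
    t v ≤ t' v + (ε + G.height v * ((1 + 1 / b ^ 2) * δ)) := by
  induction v using WellFounded.induction G.acyclic with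
  | _ v ih =>
    by_cases hv : v ∈ G.Vin
    · rw [ht.1 v hv, ht'.1 v hv]
      linarith [hin v hv, show 0 ≤ (G.height v : ℝ) * ((1 + 1 / b ^ 2) * δ) by positivity]
    refine le_add_of_isLeast_of_potential_eq_one hv hb hδ (fun u hu => hw _ (mem_preds.1 hu))
      (fun u hu => hw' _ (mem_preds.1 hu))
      (fun u hu => hww _ (mem_preds.1 hu))
      (ht.2 v hv) (ht'.2 v hv).1 fun u hu => ?_
    have hu := mem_preds.1 hu
    have hh : (G.height u : ℝ) + 1 ≤ G.height v := by exact_mod_cast height_succ_le hu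
    have hc : 0 ≤ (1 + 1 / b ^ 2) * δ := by positivity
    have hδb : (1 + 1 / b ^ 2) * δ = δ + δ / b ^ 2 := by ring
    nlinarith [ih u hu, hdd _ hu]

end SpikeMap

lemma abs_extend_le {ι β : Type*} [Fintype ι] (f : ι → β) (y : ι → ℝ) (v : β) :
    |Function.extend f y (fun _ => 0) v| ≤ ‖y‖ := by
  classical
  rw [Function.extend_def]
  split_ifs with h
  · exact norm_le_pi_norm y _
  · simp

lemma abs_extend_sub_extend_le {ι β : Type*} [Fintype ι] (f : ι → β) (y y' : ι → ℝ) (v : β) :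
    |Function.extend f y (fun _ => 0) v - Function.extend f y' (fun _ => 0) v| ≤ ‖y - y'‖ := by
  classical
  rw [Function.extend_def, Function.extend_def]
  split_ifs with h
  · exact norm_le_pi_norm (y - y') _
  · simp

lemma abs_sub_le_paramDist {V : Type} [Fintype V] [DecidableEq V] {G : NetworkGraph V}
    {w d w' d' : V × V → ℝ} {e : V × V} (he : e ∈ G.E) :
    |w e - w' e| ≤ paramDist G w d w' d' ∧ |d e - d' e| ≤ paramDist G w d w' d' := by
  have h := le_csSup (G.E.finite_toSet.image _).bddAbove
    (Set.mem_image_of_mem (fun e => max |w e - w' e| |d e - d' e|) he)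
  exact ⟨(le_max_left _ _).trans h, (le_max_right _ _).trans h⟩

lemma paramDist_nonneg {V : Type} [Fintype V] [DecidableEq V] (G : NetworkGraph V)
    (w d w' d' : V × V → ℝ) : 0 ≤ paramDist G w d w' d' := by
  rcases G.E.eq_empty_or_nonempty with h | ⟨e, he⟩
  · simp [paramDist, h]
  · exact (abs_nonneg _).trans (abs_sub_le_paramDist he).1

section Realization

variable {V : Type} [Fintype V] [DecidableEq V] {G : NetworkGraph V} {w d : V × V → ℝ}
  {din dout L : ℕ} (ein : Fin din → V) (eout : Fin dout → V)

lemma norm_snnReal_le {b B : ℝ} (hb : 0 < b) (hB : 0 ≤ B) (hw : ∀ e ∈ G.E, b ≤ w e)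
    (hd : ∀ e ∈ G.E, 0 ≤ d e) (hdB : ∀ e ∈ G.E, d e ≤ B) (hL : ∀ n, G.HasPathLen n → n ≤ L)
    (y : Fin din → ℝ) : ‖snnReal G w d ein eout y‖ ≤ ‖y‖ + L * (1 / b + B) := by
  have ht := isSpikeMap_spikeMap (d := d) (Function.extend ein y fun _ => 0)
    fun e he => hb.trans_le (hw e he)
  refine (pi_norm_le_iff_of_nonneg (by positivity)).2 fun j => ?_
  simp only [snnReal, Real.norm_eq_abs, abs_le]
  constructor
  · have := ht.le_apply hd (m := -‖y‖) fun v _ => neg_le_of_abs_le (abs_extend_le ein y v)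
    nlinarith [this (eout j), show 0 ≤ (L : ℝ) * (1 / b + B) by positivity]
  · have := ht.apply_le_add_height hb hB hw hdB fun v _ => le_of_abs_le (abs_extend_le ein y v)
    have hh : (G.height (eout j) : ℝ) ≤ L := by exact_mod_cast height_le hL _
    nlinarith [this (eout j), show 0 ≤ 1 / b + B by positivity]

lemma norm_snnReal_sub_le {w' d' : V × V → ℝ} {b : ℝ} (hb : 0 < b) (hw : ∀ e ∈ G.E, b ≤ w e)
    (hw' : ∀ e ∈ G.E, b ≤ w' e) (hL : ∀ n, G.HasPathLen n → n ≤ L) (y y' : Fin din → ℝ) :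
    ‖snnReal G w d ein eout y - snnReal G w' d' ein eout y'‖
      ≤ ‖y - y'‖ + L * (1 + 1 / b ^ 2) * paramDist G w d w' d' := by
  set δ := paramDist G w d w' d'
  have hδ : 0 ≤ δ := paramDist_nonneg G w d w' d'
  have hδw : ∀ e ∈ G.E, |w e - w' e| ≤ δ := fun e he => (abs_sub_le_paramDist he).1
  have hδd : ∀ e ∈ G.E, |d e - d' e| ≤ δ := fun e he => (abs_sub_le_paramDist he).2
  have ht := isSpikeMap_spikeMap (d := d) (Function.extend ein y fun _ => 0)
    fun e he => hb.trans_le (hw e he)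
  have ht' := isSpikeMap_spikeMap (d := d') (Function.extend ein y' fun _ => 0)
    fun e he => hb.trans_le (hw' e he)
  have hin := abs_extend_sub_extend_le ein y y'
  have h₁ := ht.apply_le_apply_add_height ht' (ε := ‖y - y'‖) hb hδ hw hw'
    (fun e he => by linarith [abs_le.1 (hδw e he)]) (fun e he => by linarith [abs_le.1 (hδd e he)])
    fun v _ => by linarith [abs_le.1 (hin v)]
  have h₂ := ht'.apply_le_apply_add_height ht (ε := ‖y - y'‖) hb hδ hw' hw
    (fun e he => by linarith [abs_le.1 (hδw e he)]) (fun e he => by linarith [abs_le.1 (hδd e he)])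
    fun v _ => by linarith [abs_le.1 (hin v)]
  refine (pi_norm_le_iff_of_nonneg (by positivity)).2 fun j => ?_
  simp only [snnReal, Pi.sub_apply, Real.norm_eq_abs, abs_sub_le_iff]
  have hh : (G.height (eout j) : ℝ) ≤ L := by exact_mod_cast height_le hL _
  have hc : 0 ≤ (1 + 1 / b ^ 2) * δ := by positivity
  constructor <;> nlinarith [h₁ (eout j), h₂ (eout j)]

end Realization

lemma sum_abs_le_sqrt_mul_frobNorm {m n : ℕ} (A : Matrix (Fin m) (Fin n) ℝ) (i : Fin m) :
    ∑ j, |A i j| ≤ √n * frobNorm A := by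
  rw [frobNorm, ← Real.sqrt_mul (Nat.cast_nonneg _)]
  refine Real.le_sqrt_of_sq_le ?_
  calc (∑ j, |A i j|) ^ 2 ≤ n * ∑ j, A i j ^ 2 := by
        simpa using sq_sum_le_card_mul_sum_sq (s := univ) (f := fun j => |A i j|)
    _ ≤ n * ∑ i, ∑ j, A i j ^ 2 := by
        gcongr
        exact single_le_sum (f := fun i => ∑ j, A i j ^ 2)
          (fun i _ => sum_nonneg fun j _ => sq_nonneg _) (mem_univ i)

lemma frobNorm_nonneg {m n : ℕ} (A : Matrix (Fin m) (Fin n) ℝ) : 0 ≤ frobNorm A :=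
  Real.sqrt_nonneg _

lemma norm_mulVec_le_frobNorm {m n : ℕ} (A : Matrix (Fin m) (Fin n) ℝ) (z : Fin n → ℝ) :
    ‖A *ᵥ z‖ ≤ √n * frobNorm A * ‖z‖ := by
  have := frobNorm_nonneg A
  refine (pi_norm_le_iff_of_nonneg (by positivity)).2 fun i => ?_
  calc |∑ j, A i j * z j| ≤ ∑ j, |A i j| * ‖z‖ := by
        refine (abs_sum_le_sum_abs _ _).trans (sum_le_sum fun j _ => ?_)
        rw [abs_mul]
        exact mul_le_mul_of_nonneg_left (norm_le_pi_norm z j) (abs_nonneg _)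
    _ ≤ √n * frobNorm A * ‖z‖ := by
        rw [← sum_mul]
        exact mul_le_mul_of_nonneg_right (sum_abs_le_sqrt_mul_frobNorm A i) (norm_nonneg z)

lemma norm_mulVec_add_sub_mulVec_add_le {m n : ℕ} (W W' : Matrix (Fin m) (Fin n) ℝ)
    (c c' : Fin m → ℝ) (z z' : Fin n → ℝ) :
    ‖W *ᵥ z + c - (W' *ᵥ z' + c')‖
      ≤ √n * frobNorm W * ‖z - z'‖ + √n * frobNorm (W - W') * ‖z'‖ + ‖c - c'‖ := by
  have h : W *ᵥ z + c - (W' *ᵥ z' + c') = W *ᵥ (z - z') + (W - W') *ᵥ z' + (c - c') := by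
    rw [Matrix.mulVec_sub, Matrix.sub_mulVec]
    abel
  rw [h]
  refine (norm_add₃_le ..).trans ?_
  gcongr <;> exact norm_mulVec_le_frobNorm _ _

theorem statement4_general {V : Type} [Fintype V] [DecidableEq V]
    (G : NetworkGraph V) {din dout d0 d1 : ℕ}
    (ein : Fin din → V) (eout : Fin dout → V)
    (w d w' d' : V × V → ℝ)
    (Win Win' : Matrix (Fin din) (Fin d0) ℝ) (bin bin' : Fin din → ℝ)
    (Wout Wout' : Matrix (Fin d1) (Fin dout) ℝ) (bout bout' : Fin d1 → ℝ)
    (b B : ℝ) (hb : 0 < b) (hB : 0 < B)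
    (hw : ∀ e ∈ G.E, b ≤ w e) (hw' : ∀ e ∈ G.E, b ≤ w' e)
    (hdnn' : ∀ e ∈ G.E, 0 ≤ d' e)
    (hdB' : ∀ e ∈ G.E, d' e ≤ B)
    (L : ℕ) (hL : G.DepthEq L)
    (x : Fin d0 → ℝ) :
    ‖affineReal G w d ein eout Win bin Wout bout x
        - affineReal G w' d' ein eout Win' bin' Wout' bout' x‖ ≤
      (Real.sqrt dout * max (frobNorm Wout) (frobNorm Wout') *
        (Real.sqrt d0 * frobNorm (Win - Win') * ‖x‖
          + (L : ℝ) * (1 + 1 / b ^ 2) * paramDist G w d w' d'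
          + ‖bin - bin'‖))
      + (Real.sqrt dout * frobNorm (Wout - Wout') *
          (Real.sqrt d0 * max (frobNorm Win) (frobNorm Win') * ‖x‖
            + max ‖bin‖ ‖bin'‖ + (L : ℝ) * (1 / b + B))
        + ‖bout - bout'‖) := by
  set y := Win *ᵥ x + bin
  set y' := Win' *ᵥ x + bin'
  have hy : ‖y - y'‖ ≤ √d0 * frobNorm (Win - Win') * ‖x‖ + ‖bin - bin'‖ := by
    simpa using norm_mulVec_add_sub_mulVec_add_le Win Win' bin bin' x x
  have hy' : ‖y'‖ ≤ √d0 * max (frobNorm Win) (frobNorm Win') * ‖x‖ + max ‖bin‖ ‖bin'‖ := by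
    calc ‖y'‖ ≤ √d0 * frobNorm Win' * ‖x‖ + ‖bin'‖ :=
          (norm_add_le _ _).trans (by gcongr; exact norm_mulVec_le_frobNorm _ _)
      _ ≤ _ := by gcongr <;> apply le_max_right
  have hz := norm_snnReal_sub_le (d := d) (d' := d') ein eout hb hw hw' hL.2 y y'
  have hz' := norm_snnReal_le ein eout hb hB.le hw' hdnn' hdB' hL.2 y'
  have hΔWout := frobNorm_nonneg (Wout - Wout')
  calc _ ≤ √dout * frobNorm Wout * ‖snnReal G w d ein eout y - snnReal G w' d' ein eout y'‖
        + √dout * frobNorm (Wout - Wout') * ‖snnReal G w' d' ein eout y'‖ + ‖bout - bout'‖ :=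
        norm_mulVec_add_sub_mulVec_add_le _ _ _ _ _ _
    _ ≤ √dout * max (frobNorm Wout) (frobNorm Wout') *
          (√d0 * frobNorm (Win - Win') * ‖x‖ + ‖bin - bin'‖
            + L * (1 + 1 / b ^ 2) * paramDist G w d w' d')
        + √dout * frobNorm (Wout - Wout') *
          (√d0 * max (frobNorm Win) (frobNorm Win') * ‖x‖ + max ‖bin‖ ‖bin'‖ + L * (1 / b + B))
        + ‖bout - bout'‖ := by
      gcongr
      · exact mul_nonneg (Real.sqrt_nonneg _) ((frobNorm_nonneg _).trans (le_max_left _ _))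
      · exact le_max_left _ _
      · exact hz.trans (by gcongr)
      · exact hz'.trans (by gcongr)
    _ = _ := by ring

/-- Theorem: Lipschitz continuity of affine SNNs in their
parameters. For two affine SNNs on the same graph of depth `L`, with synaptic
weights ≥ `b` and delays ≤ `B`, for every input `x`:
`‖R(Ψ)(x) − R(Ψ̃)(x)‖_∞ ≤ B₁ + B₂` with `B₁`, `B₂` as in the paper. -/
theorem statement4 {V : Type} [Fintype V] [DecidableEq V]
    (G : NetworkGraph V) {din dout d0 d1 : ℕ}
    (ein : Fin din → V) (eout : Fin dout → V)
    (hein : Function.Injective ein) (heinr : Set.range ein = G.Vin)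
    (heout : Function.Injective eout) (heoutr : Set.range eout = G.Vout)
    (w d w' d' : V × V → ℝ)
    (Win Win' : Matrix (Fin din) (Fin d0) ℝ) (bin bin' : Fin din → ℝ)
    (Wout Wout' : Matrix (Fin d1) (Fin dout) ℝ) (bout bout' : Fin d1 → ℝ)
    (b B : ℝ) (hb : 0 < b) (hB : 0 < B)
    (hw : ∀ e ∈ G.E, b ≤ w e) (hw' : ∀ e ∈ G.E, b ≤ w' e)
    (hdnn : ∀ e ∈ G.E, 0 ≤ d e) (hdnn' : ∀ e ∈ G.E, 0 ≤ d' e)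
    (hdB : ∀ e ∈ G.E, d e ≤ B) (hdB' : ∀ e ∈ G.E, d' e ≤ B)
    (L : ℕ) (hL : G.DepthEq L)
    (x : Fin d0 → ℝ) :
    ‖affineReal G w d ein eout Win bin Wout bout x
        - affineReal G w' d' ein eout Win' bin' Wout' bout' x‖ ≤
      (Real.sqrt dout * max (frobNorm Wout) (frobNorm Wout') *
        (Real.sqrt d0 * frobNorm (Win - Win') * ‖x‖
          + (L : ℝ) * (1 + 1 / b ^ 2) * paramDist G w d w' d'
          + ‖bin - bin'‖))
      + (Real.sqrt dout * frobNorm (Wout - Wout') *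
          (Real.sqrt d0 * max (frobNorm Win) (frobNorm Win') * ‖x‖
            + max ‖bin‖ ‖bin'‖ + (L : ℝ) * (1 / b + B))
        + ‖bout - bout'‖) :=
  statement4_general G ein eout w d w' d' Win Win' bin bin' Wout Wout' bout bout' b B hb hB hw hw'
    hdnn' hdB' L hL x
end
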